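/- Let n ≥ 1, let v ∈ X, and let U ⊆ X be such that the balls {B_u(Q^{n−1}/2)}_{u∈U} cover the ball B_v(Q^n), i.e., B_v(Q^n) ⊆ ⋃_{u∈U} B_u(Q^{n−1}/2). Then the probability that some level-n chunk of ε intersects B_v(Q^n/2) is at most ( Σ_{u∈U} Pr[some level-(n−1) chunk of ε intersects B_u(Q^{n−1}/2)] )². -/

import Mathlib

open scoped ENNReal

/-- A level-`n` chunk of the error configuration `ε`. -/
def IsChunk {X : Type*} [MetricSpace X] (Q : ℝ) (ε : Set X) : ℕ → Set X → Prop
  | 0, C => ∃ x ∈ ε, C = {x}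
  | n + 1, C => ∃ A B : Set X, IsChunk Q ε n A ∧ IsChunk Q ε n B ∧ Disjoint A B ∧
      C = A ∪ B ∧ Metric.diam C ≤ Q ^ (n + 1) / 2

/-- The Bernoulli(`p`) product measure: each point of `X` is included in the random subset
independently with probability `p` (for `p ∈ [0,1]`); a random subset is encoded as its
indicator function `f : X → Bool`, the subset being `{x | f x = true}`. -/
noncomputable def bernoulliProduct (X : Type*) [Fintype X] (p : ℝ) :
    MeasureTheory.Measure (X → Bool) :=
  MeasureTheory.Measure.pi fun _ =>
    (PMF.bernoulli (min (Real.toNNReal p) 1) (min_le_right _ _)).toMeasure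

/-
A level-`n` chunk meeting `B_v(Q^n/2)` has diameter at most `Q^n/2`, hence lies in `B_v(Q^n)`.
It is the union of two disjoint level-`(n-1)` chunks, each of which therefore meets a covering
ball. So the event lies in the disjoint occurrence, with itself, of the increasing event "some
level-`(n-1)` chunk meets some covering ball", and the van den Berg–Kesten inequality bounds its
probability by the square of the probability of that event, which the union bound controls.

The van den Berg–Kesten inequality is proved by interpolation: pair a configuration `f` with the
configuration that agrees with an independent copy `g` on `K` and with `f` off `K`. Moving one
site `x` into `K` does not decrease the probability that the pair has disjoint witnesses, since
exchanging `f x` and `g x` preserves the product measure and disjoint witnesses share no site.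
-/

open MeasureTheory Function

section DisjointOccurrence

variable {X : Type*}

def Witnessed (G : Set X → Prop) (f : X → Bool) : Prop :=
  ∃ A, G A ∧ A ⊆ {x | f x = true}

def DisjointlyWitnessed (G : Set X → Prop) (f g : X → Bool) : Prop :=
  ∃ A B, G A ∧ G B ∧ Disjoint A B ∧ A ⊆ {x | f x = true} ∧ B ⊆ {x | g x = true}

variable {G : Set X → Prop} {f g f' g' : X → Bool}

lemma DisjointlyWitnessed.mono (h : DisjointlyWitnessed G f g)
    (hf : {x | f x = true} ⊆ {x | f' x = true}) (hg : {x | g x = true} ⊆ {x | g' x = true}) :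
    DisjointlyWitnessed G f' g' :=
  let ⟨A, B, hA, hB, hAB, hAf, hBg⟩ := h
  ⟨A, B, hA, hB, hAB, hAf.trans hf, hBg.trans hg⟩

lemma DisjointlyWitnessed.witnessed (h : DisjointlyWitnessed G f g) :
    Witnessed G f ∧ Witnessed G g :=
  let ⟨A, B, hA, hB, _, hAf, hBg⟩ := h
  ⟨⟨A, hA, hAf⟩, ⟨B, hB, hBg⟩⟩

variable [DecidableEq X]

lemma setOf_update_false_subset (f : X → Bool) (x : X) (b : Bool) :
    {y | update f x false y = true} ⊆ {y | update f x b y = true} := by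
  intro y hy
  rcases eq_or_ne y x with rfl | hyx
  · simp at hy
  · simpa [update_of_ne hyx] using hy

lemma subset_setOf_update_of_notMem {A : Set X} {x : X} (hx : x ∉ A) (b c : Bool)
    (hA : A ⊆ {y | update f x b y = true}) : A ⊆ {y | update f x c y = true} := by
  intro y hy
  have hyx : y ≠ x := ne_of_mem_of_not_mem hy hx
  simpa [update_of_ne hyx] using hA hy

/-- A pair of disjoint witnesses uses the site `x` at most once. -/
lemma DisjointlyWitnessed.update_true (x : X)
    (h : DisjointlyWitnessed G (update f x true) (update g x true)) :
    DisjointlyWitnessed G (update f x false) (update g x true) ∨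
      DisjointlyWitnessed G (update f x true) (update g x false) := by
  obtain ⟨A, B, hA, hB, hAB, hAf, hBg⟩ := h
  by_cases hxA : x ∈ A
  · exact .inr ⟨A, B, hA, hB, hAB, hAf,
      subset_setOf_update_of_notMem (hAB.notMem_of_mem_left hxA) _ _ hBg⟩
  · exact .inl ⟨A, B, hA, hB, hAB, subset_setOf_update_of_notMem hxA _ _ hAf, hBg⟩

lemma ite_add_ite_le_ite_add_ite {P₁ P₂ R₁ R₂ : Prop} [Decidable P₁] [Decidable P₂]
    [Decidable R₁] [Decidable R₂] {M : Type*} [AddCommMonoid M] [PartialOrder M]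
    [IsOrderedAddMonoid M] {w : M} (hw : 0 ≤ w)
    (hand : P₁ ∧ P₂ → R₁ ∧ R₂) (hor : P₁ ∨ P₂ → R₁ ∨ R₂) :
    (if P₁ then w else 0) + (if P₂ then w else 0) ≤
      (if R₁ then w else 0) + (if R₂ then w else 0) := by
  split_ifs <;> simp_all [le_add_of_nonneg_right, add_nonneg]

open scoped Classical in
/-- Exchanging the values at one site between the two arguments can only create disjoint
witnesses: this is the one-site case of the van den Berg–Kesten inequality. -/
lemma ite_disjointlyWitnessed_exchange {M : Type*} [AddCommMonoid M] [PartialOrder M]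
    [IsOrderedAddMonoid M] {w : M} (hw : 0 ≤ w) (f g : X → Bool) (x : X) (a b : Bool) :
    (if DisjointlyWitnessed G (update f x a) (update g x a) then w else 0) +
        (if DisjointlyWitnessed G (update f x b) (update g x b) then w else 0) ≤
      (if DisjointlyWitnessed G (update f x a) (update g x b) then w else 0) +
        (if DisjointlyWitnessed G (update f x b) (update g x a) then w else 0) := by
  have hleft (c : Bool) (h : DisjointlyWitnessed G (update f x false) (update g x c)) :
      DisjointlyWitnessed G (update f x true) (update g x c) :=
    h.mono (setOf_update_false_subset f x true) le_rfl
  have hright (c : Bool) (h : DisjointlyWitnessed G (update f x c) (update g x false)) :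
      DisjointlyWitnessed G (update f x c) (update g x true) :=
    h.mono le_rfl (setOf_update_false_subset g x true)
  have hsplit := DisjointlyWitnessed.update_true (G := G) (f := f) (g := g) x
  apply ite_add_ite_le_ite_add_ite hw <;> cases a <;> cases b <;> grind

end DisjointOccurrence

section BKInequality

open scoped Classical

lemma measure_eq_sum_ite {α : Type*} [Fintype α] [MeasurableSpace α]
    [MeasurableSingletonClass α] (μ : Measure α) (s : Set α) :
    μ s = ∑ a, if a ∈ s then μ {a} else 0 := by
  rw [← Finset.sum_filter, sum_measure_singleton]
  congr
  ext
  simp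

variable {X : Type*} [Fintype X]

lemma pi_singleton_update_mul_pi_singleton_update {ν : X → Measure Bool}
    [∀ x, SigmaFinite (ν x)] (f g : X → Bool) (x : X) :
    Measure.pi ν {update f x (g x)} * Measure.pi ν {update g x (f x)} =
      Measure.pi ν {f} * Measure.pi ν {g} := by
  simp only [Measure.pi_singleton, ← Finset.prod_mul_distrib]
  refine Finset.prod_congr rfl fun y _ => ?_
  rcases eq_or_ne y x with rfl | hyx
  · simp [mul_comm]
  · simp [update_of_ne hyx]

noncomputable def coupledMass (μ : Measure (X → Bool)) (G : Set X → Prop) (K : Finset X) :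
    ℝ≥0∞ :=
  ∑ q : (X → Bool) × (X → Bool),
    if DisjointlyWitnessed G q.1 (K.piecewise q.2 q.1) then μ {q.1} * μ {q.2} else 0

variable (μ : Measure (X → Bool)) (G : Set X → Prop)

lemma coupledMass_empty [IsProbabilityMeasure μ] :
    coupledMass μ G ∅ = μ {f | DisjointlyWitnessed G f f} := by
  simp only [coupledMass, Finset.piecewise_empty, Fintype.sum_prod_type, ← ite_zero_mul,
    ← Finset.mul_sum, sum_measure_singleton, Finset.coe_univ, measure_univ, mul_one]
  rw [measure_eq_sum_ite]
  rfl

lemma coupledMass_univ_le : coupledMass μ G Finset.univ ≤ μ {f | Witnessed G f} ^ 2 := by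
  rw [coupledMass, Fintype.sum_prod_type, sq, measure_eq_sum_ite, Finset.sum_mul_sum]
  refine Finset.sum_le_sum fun f _ => Finset.sum_le_sum fun g _ => ?_
  rw [Finset.piecewise_univ, ite_zero_mul_ite_zero]
  by_cases h : DisjointlyWitnessed G f g
  · rw [if_pos h, if_pos]
    exact h.witnessed
  · rw [if_neg h]
    exact zero_le

lemma coupledMass_le_insert {ν : X → Measure Bool} [∀ x, SigmaFinite (ν x)] {x : X}
    {K : Finset X} (hx : x ∉ K) :
    coupledMass (Measure.pi ν) G K ≤ coupledMass (Measure.pi ν) G (insert x K) := by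
  set μ := Measure.pi ν
  let swap (q : (X → Bool) × (X → Bool)) : (X → Bool) × (X → Bool) :=
    (update q.1 x (q.2 x), update q.2 x (q.1 x))
  have hswap : Involutive swap := by
    rintro ⟨f, g⟩
    simp [swap]
  let term (L : Finset X) (q : (X → Bool) × (X → Bool)) : ℝ≥0∞ :=
    if DisjointlyWitnessed G q.1 (L.piecewise q.2 q.1) then μ {q.1} * μ {q.2} else 0
  have hpair (q) :
      term K q + term K (swap q) ≤ term (insert x K) q + term (insert x K) (swap q) := by
    obtain ⟨f, g⟩ := q
    set h := K.piecewise g f with hh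
    have hhx : h x = f x := K.piecewise_eq_of_notMem _ _ hx
    have e1 : K.piecewise (update g x (f x)) (update f x (g x)) = update h x (g x) := by
      rw [hh, Finset.update_piecewise_of_notMem (hi := hx)]
      exact K.piecewise_congr (fun y hy => update_of_ne (ne_of_mem_of_not_mem hy hx) ..)
        fun _ _ => rfl
    have e2 : (insert x K).piecewise g f = update h x (g x) := by
      rw [Finset.piecewise_insert]
    have e3 : (insert x K).piecewise (update g x (f x)) (update f x (g x)) = update h x (f x) := by
      rw [Finset.piecewise_insert, e1]; simp
    have e0 : update h x (f x) = h := by rw [← hhx, update_eq_self]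
    have hμ : μ {update f x (g x)} * μ {update g x (f x)} = μ {f} * μ {g} :=
      pi_singleton_update_mul_pi_singleton_update f g x
    have := ite_disjointlyWitnessed_exchange (G := G) (zero_le (a := μ {f} * μ {g}))
      f h x (f x) (g x)
    simpa only [term, swap, e1, e2, e3, e0, hμ, update_eq_self] using this
  have hdouble (L : Finset X) : 2 * coupledMass μ G L = ∑ q, (term L q + term L (swap q)) := by
    rw [Finset.sum_add_distrib, two_mul,
      Fintype.sum_bijective swap hswap.bijective (fun q => term L (swap q)) (term L) fun _ => rfl]
    rfl
  have htwo : 2 * coupledMass μ G K ≤ 2 * coupledMass μ G (insert x K) := by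
    rw [hdouble, hdouble]
    exact Finset.sum_le_sum fun q _ => hpair q
  exact (ENNReal.mul_le_mul_iff_right two_ne_zero ENNReal.ofNat_ne_top).1 htwo

/-- The van den Berg–Kesten inequality. -/
theorem measure_disjointlyWitnessed_le_sq {ν : X → Measure Bool}
    [∀ x, IsProbabilityMeasure (ν x)] :
    Measure.pi ν {f | DisjointlyWitnessed G f f} ≤ Measure.pi ν {f | Witnessed G f} ^ 2 := by
  have hmono (K : Finset X) :
      coupledMass (Measure.pi ν) G ∅ ≤ coupledMass (Measure.pi ν) G K := by
    induction K using Finset.induction_on with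
    | empty => exact le_rfl
    | insert x K hx ih => exact ih.trans (coupledMass_le_insert G hx)
  rw [← coupledMass_empty]
  exact (hmono Finset.univ).trans (coupledMass_univ_le _ G)

end BKInequality

section Chunks

variable {X : Type*} [MetricSpace X] {Q : ℝ} {ε : Set X} {n : ℕ} {C : Set X}

lemma IsChunk.nonempty (hC : IsChunk Q ε n C) : C.Nonempty := by
  induction n generalizing C with
  | zero => obtain ⟨x, _, rfl⟩ := hC; exact Set.singleton_nonempty x
  | succ n ih => obtain ⟨A, B, hA, _, _, rfl, _⟩ := hC; exact (ih hA).mono Set.subset_union_left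

lemma IsChunk.finite (hC : IsChunk Q ε n C) : C.Finite := by
  induction n generalizing C with
  | zero => obtain ⟨x, _, rfl⟩ := hC; exact Set.finite_singleton x
  | succ n ih => obtain ⟨A, B, hA, hB, _, rfl, _⟩ := hC; exact (ih hA).union (ih hB)

lemma IsChunk.diam_le (hC : IsChunk Q ε n C) : Metric.diam C ≤ Q ^ n / 2 := by
  cases n with
  | zero => obtain ⟨x, _, rfl⟩ := hC; norm_num
  | succ n => obtain ⟨A, B, -, -, -, rfl, hdiam⟩ := hC; exact hdiam

lemma IsChunk.subset_ball {v : X} (hC : IsChunk Q ε n C)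
    (hv : (C ∩ Metric.ball v (Q ^ n / 2)).Nonempty) : C ⊆ Metric.ball v (Q ^ n) := by
  obtain ⟨c, hcC, hcv⟩ := hv
  intro a ha
  rw [Metric.mem_ball] at hcv ⊢
  calc dist a v ≤ dist a c + dist c v := dist_triangle a c v
    _ < Q ^ n / 2 + Q ^ n / 2 :=
      add_lt_add_of_le_of_lt
        ((Metric.dist_le_diam_of_mem hC.finite.isBounded ha hcC).trans hC.diam_le) hcv
    _ = Q ^ n := add_halves _

lemma isChunk_iff_isChunk_univ : IsChunk Q ε n C ↔ IsChunk Q Set.univ n C ∧ C ⊆ ε := by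
  induction n generalizing C with
  | zero =>
    refine ⟨fun ⟨x, hx, hC⟩ => ⟨⟨x, trivial, hC⟩, hC ▸ Set.singleton_subset_iff.2 hx⟩, ?_⟩
    rintro ⟨⟨x, -, rfl⟩, hx⟩
    exact ⟨x, Set.singleton_subset_iff.1 hx, rfl⟩
  | succ n ih =>
    constructor
    · rintro ⟨A, B, hA, hB, hAB, rfl, hdiam⟩
      exact ⟨⟨A, B, (ih.1 hA).1, (ih.1 hB).1, hAB, rfl, hdiam⟩,
        Set.union_subset (ih.1 hA).2 (ih.1 hB).2⟩
    · rintro ⟨⟨A, B, hA, hB, hAB, rfl, hdiam⟩, hε⟩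
      exact ⟨A, B, ih.2 ⟨hA, Set.subset_union_left.trans hε⟩,
        ih.2 ⟨hB, Set.subset_union_right.trans hε⟩, hAB, rfl, hdiam⟩

lemma disjointlyWitnessed_of_isChunk_succ {f : X → Bool} {m : ℕ} {v : X} {U : Finset X} {r : ℝ}
    (hcover : Metric.ball v (Q ^ (m + 1)) ⊆ ⋃ u ∈ U, Metric.ball u r)
    (hC : IsChunk Q {x | f x = true} (m + 1) C)
    (hv : (C ∩ Metric.ball v (Q ^ (m + 1) / 2)).Nonempty) :
    DisjointlyWitnessed
      (fun A => IsChunk Q Set.univ m A ∧ ∃ u ∈ U, (A ∩ Metric.ball u r).Nonempty) f f := by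
  have hball := hC.subset_ball hv
  obtain ⟨A, B, hA, hB, hAB, rfl, -⟩ := hC
  have hmeets {D : Set X} (hD : IsChunk Q {x | f x = true} m D) (hDC : D ⊆ A ∪ B) :
      ∃ u ∈ U, (D ∩ Metric.ball u r).Nonempty := by
    obtain ⟨d, hd⟩ := hD.nonempty
    obtain ⟨u, hu, hdu⟩ := Set.mem_iUnion₂.1 (hcover (hball (hDC hd)))
    exact ⟨u, hu, d, hd, hdu⟩
  exact ⟨A, B, ⟨(isChunk_iff_isChunk_univ.1 hA).1, hmeets hA Set.subset_union_left⟩,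
    ⟨(isChunk_iff_isChunk_univ.1 hB).1, hmeets hB Set.subset_union_right⟩, hAB,
    (isChunk_iff_isChunk_univ.1 hA).2, (isChunk_iff_isChunk_univ.1 hB).2⟩

end Chunks

theorem statement6_general {X : Type*} [MetricSpace X] [Fintype X] (Q p : ℝ) (n : ℕ)
    (hn : 1 ≤ n) (v : X) (U : Finset X)
    (hcover : Metric.ball v (Q ^ n) ⊆ ⋃ u ∈ U, Metric.ball (u : X) (Q ^ (n - 1) / 2)) :
    bernoulliProduct X p
      {f | ∃ C : Set X, IsChunk Q {x | f x = true} n C ∧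
        (C ∩ Metric.ball v (Q ^ n / 2)).Nonempty} ≤
    (∑ u ∈ U, bernoulliProduct X p
      {f | ∃ C : Set X, IsChunk Q {x | f x = true} (n - 1) C ∧
        (C ∩ Metric.ball (u : X) (Q ^ (n - 1) / 2)).Nonempty}) ^ 2 := by
  obtain ⟨m, rfl⟩ : ∃ m, n = m + 1 := ⟨n - 1, by omega⟩
  rw [Nat.add_sub_cancel] at hcover ⊢
  set G : Set X → Prop :=
    fun A => IsChunk Q Set.univ m A ∧ ∃ u ∈ U, (A ∩ Metric.ball u (Q ^ m / 2)).Nonempty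
  calc _ ≤ bernoulliProduct X p {f | DisjointlyWitnessed G f f} := by
        refine measure_mono fun f ⟨C, hC, hv⟩ => ?_
        exact disjointlyWitnessed_of_isChunk_succ hcover hC hv
    _ ≤ bernoulliProduct X p {f | Witnessed G f} ^ 2 := measure_disjointlyWitnessed_le_sq G
    _ ≤ bernoulliProduct X p (⋃ u ∈ U, {f | ∃ C : Set X, IsChunk Q {x | f x = true} m C ∧
          (C ∩ Metric.ball u (Q ^ m / 2)).Nonempty}) ^ 2 := by
        gcongr
        rintro f ⟨A, ⟨hA, u, hu, hAu⟩, hAf⟩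
        exact Set.mem_iUnion₂.2 ⟨u, hu, A, isChunk_iff_isChunk_univ.2 ⟨hA, hAf⟩, hAu⟩
    _ ≤ _ := by
        gcongr
        exact measure_biUnion_finset_le U _

theorem statement6 {X : Type*} [MetricSpace X] [Fintype X] (Q p : ℝ) (hQ : 6 ≤ Q)
    (hp0 : 0 ≤ p) (hp1 : p ≤ 1) (n : ℕ) (hn : 1 ≤ n) (v : X) (U : Finset X)
    (hcover : Metric.ball v (Q ^ n) ⊆ ⋃ u ∈ U, Metric.ball (u : X) (Q ^ (n - 1) / 2)) :
    bernoulliProduct X p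
      {f | ∃ C : Set X, IsChunk Q {x | f x = true} n C ∧
        (C ∩ Metric.ball v (Q ^ n / 2)).Nonempty} ≤
    (∑ u ∈ U, bernoulliProduct X p
      {f | ∃ C : Set X, IsChunk Q {x | f x = true} (n - 1) C ∧
        (C ∩ Metric.ball (u : X) (Q ^ (n - 1) / 2)).Nonempty}) ^ 2 :=
  statement6_general Q p n hn v U hcover
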